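/- arXiv:2307.09258 — 3 statements merged into one kernel-verified Lean document; each statement's English description precedes it below -/
import Mathlib

section
/- Combining a (2+ε)-approximation δ (with ε = 1/log n) floored to the integers and a +log n additive approximation δ' by taking δ̂ = min(⌊δ⌋, δ') yields a 2-approximation: for every pair u,v of vertices in an unweighted graph, d(u,v) ≤ δ̂(u,v) ≤ 2·d(u,v). -/
/-- Combining a `(2 + 1/L)`-approximation `δ` (floored) with a `+L` additive
approximation `δ'` via a pointwise minimum yields a 2-approximation, where
`L = log n` is a positive integer and distances are natural numbers. -/
theorem stmt_6 {V : Type*} (d : V → V → ℕ) (L : ℕ) (hL : 0 < L)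
    (δ : V → V → ℝ) (δ' : V → V → ℤ)
    (hδ1 : ∀ u v, (d u v : ℝ) ≤ δ u v)
    (hδ2 : ∀ u v, δ u v ≤ (2 + 1 / (L : ℝ)) * d u v)
    (hδ'1 : ∀ u v, (d u v : ℤ) ≤ δ' u v)
    (hδ'2 : ∀ u v, δ' u v ≤ (d u v : ℤ) + L) :
    ∀ u v, (d u v : ℤ) ≤ min ⌊δ u v⌋ (δ' u v) ∧
      min ⌊δ u v⌋ (δ' u v) ≤ 2 * (d u v : ℤ) := by
  intro u v
  have hLpos : (0:ℝ) < L := by exact_mod_cast hL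
  constructor
  · refine le_min ?_ (hδ'1 u v)
    have : ((d u v : ℤ) : ℝ) ≤ δ u v := by exact_mod_cast hδ1 u v
    exact Int.le_floor.mpr this
  · rcases le_or_gt (L : ℤ) (d u v) with h | h
    · calc min ⌊δ u v⌋ (δ' u v) ≤ δ' u v := min_le_right _ _
        _ ≤ (d u v : ℤ) + L := hδ'2 u v
        _ ≤ 2 * (d u v : ℤ) := by linarith
    · refine le_trans (min_le_left _ _) ?_
      have hd : (d u v : ℝ) < L := by exact_mod_cast h
      have : δ u v < 2 * (d u v : ℝ) + 1 := by
        have := hδ2 u v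
        have hdiv : (1 / (L:ℝ)) * d u v < 1 := by
          rw [div_mul_eq_mul_div, one_mul, div_lt_one hLpos]; exact hd
        nlinarith
      have hf : ⌊δ u v⌋ < 2 * (d u v : ℤ) + 1 := by
        have := Int.floor_le (δ u v)
        have : (⌊δ u v⌋ : ℝ) < 2 * (d u v : ℝ) + 1 := by linarith
        exact_mod_cast this
      omega
end

section
/- Let G be a weighted undirected graph, S a set of vertices, and for each vertex w let p(w) ∈ S satisfy d(w,p(w)) = min_{s∈S} d(w,s). Define the bunch B(w) = {x : d(w,x) < d(w,p(w))}. Let u, v be vertices and x a vertex on a shortest u-v path with x ∉ B(u) and x ∉ B(v). Then d(u,p(u)) ≤ d(u,v)/2 or d(v,p(v)) ≤ d(u,v)/2. -/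
/-- If `x` lies on a shortest `u`-`v` path and `x` is in neither bunch
(`d u x ≥ d u (p u)` and `d x v ≥ d v (p v)`), then one of the two pivot
distances is at most half of `d u v`. -/
theorem stmt_7 {V : Type*} (d : V → V → ℝ) (p : V → V)
    (hnonneg : ∀ a b, 0 ≤ d a b)
    (u v x : V)
    (hx : d u x + d x v = d u v)
    (hnotBu : d u (p u) ≤ d u x)
    (hnotBv : d v (p v) ≤ d x v) :
    d u (p u) ≤ d u v / 2 ∨ d v (p v) ≤ d u v / 2 := by
  rcases le_total (d u x) (d u v / 2) with h | h
  · exact Or.inl (hnotBu.trans h)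
  · exact Or.inr (hnotBv.trans (by linarith))
end

section
/- With pivots and bunches as above, let u,v be vertices such that some shortest u-v path contains a vertex x with x ∉ B(u) ∪ B(v), and suppose d(u,p(u)) ≤ d(u,v)/2. If δ_S satisfies d(p(u),v) ≤ δ_S(p(u),v) ≤ (1+ε/2)·d(p(u),v), then d(u,p(u)) + δ_S(p(u),v) ≤ (2+ε)·d(u,v). -/
/-- If `d u (p u) ≤ d u v / 2` and `δS` is a `(1+ε/2)`-approximation of
`d (p u) v`, then the estimate through the pivot is a `(2+ε)`-approximation. -/
theorem stmt_8 {V : Type*} (d : V → V → ℝ) (p : V → V)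
    (hnonneg : ∀ a b, 0 ≤ d a b)
    (htri : ∀ a b c, d a c ≤ d a b + d b c)
    (hsymm : ∀ a b, d a b = d b a)
    (u v : V) (ε δS : ℝ)
    (hε0 : 0 ≤ ε) (hε2 : ε ≤ 2)
    (hup : d u (p u) ≤ d u v / 2)
    (hδ1 : d (p u) v ≤ δS) (hδ2 : δS ≤ (1 + ε / 2) * d (p u) v) :
    d u (p u) + δS ≤ (2 + ε) * d u v := by
  have h1 : d (p u) v ≤ d (p u) u + d u v := htri _ _ _
  have h2 : d (p u) u = d u (p u) := hsymm _ _
  have h3 : 0 ≤ d u v := hnonneg u v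
  nlinarith [hnonneg (p u) v]
end
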